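/- Let f : ℂ → ℂ be entire (complex differentiable on all of ℂ) and map real numbers to real numbers, and let k ≥ 1 be a natural number. Then (2/π) · ∫_0^{π/2} cos(2 k x) · Re[ f( (cos x) · e^{i x} ) ] dx = (1 / (2^{k+1} · k!)) · Re[ f^{(k)}(1/2) ], where f^{(k)} denotes the k-th complex iterated derivative of f. -/

import Mathlib

/-!
Since `cos x · e^{ix} = 1/2 + e^{2ix}/2`, the Taylor expansion of `f` at `1/2`, whose coefficients
are real because `f` is real on `ℝ`, turns `Re f(cos x · e^{ix})` into the absolutely convergent
cosine series `∑ₙ f⁽ⁿ⁾(1/2) / (2ⁿ n!) · cos (2 n x)`. Integrating term by term against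
`cos (2 k x)` on `[0, π/2]`, orthogonality leaves only the `k`-th term, with weight `π/4`.
-/

open Real Nat

section RealOnReals

variable {f : ℂ → ℂ}

theorem deriv_im_eq_zero_of_im_eq_zero {x : ℝ} (hf : DifferentiableAt ℂ f x)
    (hreal : ∀ y : ℝ, (f y).im = 0) : (deriv f x).im = 0 := by
  have hres : HasDerivAt (fun y : ℝ => (f y).im) (deriv f x).im x :=
    Complex.imCLM.hasFDerivAt.comp_hasDerivAt x hf.hasDerivAt.comp_ofReal
  simp only [hreal] at hres
  exact hres.unique (hasDerivAt_const x 0)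

theorem iteratedDeriv_im_eq_zero_of_im_eq_zero (hf : Differentiable ℂ f)
    (hreal : ∀ y : ℝ, (f y).im = 0) (n : ℕ) (x : ℝ) : (iteratedDeriv n f x).im = 0 := by
  induction n generalizing x with
  | zero => exact hreal x
  | succ n ih =>
    rw [iteratedDeriv_succ]
    exact deriv_im_eq_zero_of_im_eq_zero
      ((hf.contDiff (n := ⊤)).differentiable_iteratedDeriv n (by simp) x) ih

theorem summable_abs_re_iteratedDeriv_mul_pow_div (hf : Differentiable ℂ f) (c : ℂ) (r : ℝ) :
    Summable fun n : ℕ => |(iteratedDeriv n f c).re * r ^ n / n !| := by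
  refine .of_nonneg_of_le (fun n => abs_nonneg _) (fun n => ?_)
    (summable_norm_iff.mpr (Complex.hasSum_taylorSeries_of_entire hf c (c + r)).summable)
  rw [abs_div, abs_mul, abs_pow, add_sub_cancel_left, norm_smul, norm_smul, norm_pow, norm_inv,
    Complex.norm_natCast, Complex.norm_real, Real.norm_eq_abs, Nat.abs_cast]
  calc |(iteratedDeriv n f c).re| * |r| ^ n / n !
      ≤ ‖iteratedDeriv n f c‖ * |r| ^ n / n ! := by
        gcongr; exact Complex.abs_re_le_norm _
    _ = _ := by ring

theorem hasSum_re_iteratedDeriv_mul_pow_div_mul_cos (hf : Differentiable ℂ f)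
    (hreal : ∀ y : ℝ, (f y).im = 0) (c r θ : ℝ) :
    HasSum (fun n : ℕ => (iteratedDeriv n f c).re * r ^ n / n ! * Real.cos (n * θ))
      (f (c + r * Complex.exp (θ * Complex.I))).re := by
  convert Complex.hasSum_re
    (Complex.hasSum_taylorSeries_of_entire hf c (c + r * Complex.exp (θ * Complex.I))) using 1
  funext n
  have hD : iteratedDeriv n f c = ((iteratedDeriv n f c).re : ℂ) :=
    Complex.ext rfl (iteratedDeriv_im_eq_zero_of_im_eq_zero hf hreal n c)
  have hterm : ((n ! : ℂ)⁻¹ • ((r : ℂ) * Complex.exp (θ * Complex.I)) ^ n •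
      ((iteratedDeriv n f c).re : ℂ)) =
      (((iteratedDeriv n f c).re * r ^ n / n ! : ℝ) : ℂ) *
        Complex.exp ((n * θ : ℝ) * Complex.I) := by
    rw [mul_pow, ← Complex.exp_nat_mul]
    push_cast
    simp only [smul_eq_mul]
    field_simp
  rw [add_sub_cancel_left, hD, hterm, Complex.re_ofReal_mul, Complex.exp_ofReal_mul_I_re,
    Complex.ofReal_re]

end RealOnReals

theorem integral_cos_two_int_mul (m : ℤ) :
    ∫ x in (0 : ℝ)..(π / 2), Real.cos (2 * m * x) = if m = 0 then π / 2 else 0 := by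
  rcases eq_or_ne m 0 with rfl | hm
  · simp
  · have h2m : (2 * m : ℝ) ≠ 0 := by simp [hm]
    rw [if_neg hm, intervalIntegral.integral_comp_mul_left Real.cos h2m, integral_cos,
      show 2 * m * (π / 2) = (m : ℝ) * π by ring, Real.sin_int_mul_pi, mul_zero, Real.sin_zero,
      sub_zero, smul_zero]

theorem integral_cos_two_nat_mul_mul_cos_two_nat_mul {k : ℕ} (hk : k ≠ 0) (n : ℕ) :
    ∫ x in (0 : ℝ)..(π / 2), Real.cos (2 * k * x) * Real.cos (2 * n * x) =
      if n = k then π / 4 else 0 := by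
  have hprod : ∀ x : ℝ, Real.cos (2 * k * x) * Real.cos (2 * n * x) =
      (Real.cos (2 * ((k - n : ℤ) : ℝ) * x) + Real.cos (2 * ((k + n : ℤ) : ℝ) * x)) / 2 := by
    intro x
    push_cast
    rw [show 2 * ((k : ℝ) - n) * x = 2 * k * x - 2 * n * x by ring,
      show 2 * ((k : ℝ) + n) * x = 2 * k * x + 2 * n * x by ring, ← Real.two_mul_cos_mul_cos]
    ring
  have hint : ∀ m : ℤ, IntervalIntegrable (fun x => Real.cos (2 * m * x)) MeasureTheory.volume
      0 (π / 2) := fun m => (by fun_prop : Continuous _).intervalIntegrable _ _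
  simp_rw [hprod]
  rw [intervalIntegral.integral_div, intervalIntegral.integral_add (hint _) (hint _),
    integral_cos_two_int_mul, integral_cos_two_int_mul, if_neg (by omega : (k + n : ℤ) ≠ 0)]
  rcases eq_or_ne n k with rfl | hnk
  · simp only [sub_self, if_true]
    ring
  · simp [hnk, sub_eq_zero, Ne.symm hnk]

theorem integral_cos_two_nat_mul_mul_of_hasSum {a : ℕ → ℝ} {F : ℝ → ℝ}
    (ha : Summable fun n => |a n|) (hF : ∀ x, HasSum (fun n => a n * Real.cos (2 * n * x)) (F x))
    {k : ℕ} (hk : k ≠ 0) :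
    ∫ x in (0 : ℝ)..(π / 2), Real.cos (2 * k * x) * F x = π / 4 * a k := by
  have hinterchange : HasSum
      (fun n => ∫ x in (0 : ℝ)..(π / 2), Real.cos (2 * k * x) * (a n * Real.cos (2 * n * x)))
      (∫ x in (0 : ℝ)..(π / 2), Real.cos (2 * k * x) * F x) := by
    refine intervalIntegral.hasSum_integral_of_dominated_convergence (fun n _ => |a n|)
      (fun n => (by fun_prop : Continuous _).aestronglyMeasurable) (fun n => ?_)
      (.of_forall fun _ _ => ha) intervalIntegrable_const
      (.of_forall fun x _ => (hF x).mul_left _)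
    refine .of_forall fun x _ => ?_
    rw [norm_mul, norm_mul, Real.norm_eq_abs, Real.norm_eq_abs, Real.norm_eq_abs]
    calc |Real.cos (2 * k * x)| * (|a n| * |Real.cos (2 * n * x)|) ≤ 1 * (|a n| * 1) := by
          gcongr <;> exact Real.abs_cos_le_one _
      _ = |a n| := by ring
  have hterms : (fun n => ∫ x in (0 : ℝ)..(π / 2),
      Real.cos (2 * k * x) * (a n * Real.cos (2 * n * x))) =
      fun n => if n = k then π / 4 * a k else 0 := by
    funext n
    simp_rw [mul_left_comm _ (a n), intervalIntegral.integral_const_mul,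
      integral_cos_two_nat_mul_mul_cos_two_nat_mul hk]
    split_ifs with hnk
    · rw [hnk, mul_comm]
    · exact mul_zero _
  rw [hterms] at hinterchange
  exact hinterchange.unique (hasSum_ite_eq k _)

theorem ofReal_cos_mul_exp_I_mul (x : ℝ) :
    (Real.cos x : ℂ) * Complex.exp (Complex.I * x) =
      (1 / 2 : ℝ) + (1 / 2 : ℝ) * Complex.exp ((2 * x : ℝ) * Complex.I) := by
  have hsum : Complex.exp (x * Complex.I) * Complex.exp (Complex.I * x) =
      Complex.exp (2 * x * Complex.I) := by
    rw [← Complex.exp_add]; ring_nf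
  have hdiff : Complex.exp (-x * Complex.I) * Complex.exp (Complex.I * x) = 1 := by
    rw [← Complex.exp_add, ← Complex.exp_zero]; ring_nf
  rw [Complex.ofReal_cos, Complex.cos]
  push_cast
  linear_combination (hsum + hdiff) / 2

open Real in
theorem statement_11 (f : ℂ → ℂ) (hf : Differentiable ℂ f)
    (hreal : ∀ x : ℝ, (f x).im = 0) (k : ℕ) (hk : 1 ≤ k) :
    (2 / π) * ∫ x in (0 : ℝ)..(π / 2),
        Real.cos (2 * k * x) * (f ((Real.cos x : ℂ) * Complex.exp (Complex.I * x))).re =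
      (1 / (2 ^ (k + 1) * (k.factorial : ℝ))) * (iteratedDeriv k f (1 / 2)).re := by
  have hseries : ∀ x : ℝ, HasSum
      (fun n => (iteratedDeriv n f (1 / 2)).re * (1 / 2) ^ n / n ! * Real.cos (2 * n * x))
      (f ((Real.cos x : ℂ) * Complex.exp (Complex.I * x))).re := by
    intro x
    rw [ofReal_cos_mul_exp_I_mul]
    simpa only [Complex.ofReal_div, Complex.ofReal_one, Complex.ofReal_ofNat, ← mul_assoc,
      mul_comm _ (2 : ℝ)] using
      hasSum_re_iteratedDeriv_mul_pow_div_mul_cos hf hreal (1 / 2) (1 / 2) (2 * x)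
  have hsummable := summable_abs_re_iteratedDeriv_mul_pow_div hf (1 / 2) (1 / 2)
  rw [integral_cos_two_nat_mul_mul_of_hasSum hsummable hseries (by omega), one_div_pow]
  field_simp
  ring
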